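/- arXiv:1009.4711 — 3 statements merged into one kernel-verified Lean document; each statement's English description precedes it below -/
import Mathlib

section
/- Let n ≥ 0 and t ≥ 1, let P be a graded poset of rank n+1, and let R = Rees(P, T_{t,n+1}). Then for every subset S ⊆ {1,…,n}, the flag f-vector entry satisfies f_{S ∪ {n+1}}(R) = w(S ∪ {n+1})·f_S(P). -/
/-!
A chain of `Rees(P, T)` with ranks `S ∪ {n+1}` splits into its `P`-coordinates and its word
coordinates. The `P`-coordinates form a chain of `P` with ranks `S`, topped by `1̂`, the only
element of `P` of rank `n+1`. The word coordinates `w_s` satisfy `|w_s| < s`, each is a prefix of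
the next, and the word at rank `s_i` has at most `s_i - s_{i-1}` more letters than the one at
rank `s_{i-1}`; these conditions do not involve `P`. Choosing the words from the bottom up,
the word at rank `s_i` ranges over `[s_i - s_{i-1} + 1]` extensions of the previous one, so the
word coordinates contribute the factor `w(S ∪ {n+1})`.
-/

/-- The `t`-analogue `[k] = 1 + t + ⋯ + t^(k-1)`. -/
def tnum (t k : ℕ) : ℕ := ∑ i ∈ Finset.range k, t ^ i

/-- Auxiliary product defining the weight `w`: given the previous entry `p` and the
sorted list of remaining entries, multiply the factors `[s - p + 1]`. -/
def wAux (t : ℕ) : ℕ → List ℕ → ℕ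
  | _, [] => 1
  | p, s :: rest => tnum t (s - p + 1) * wAux t s rest

/-- The weight `w(S) = [s₁]·[s₂-s₁+1]⋯[s_k-s_{k-1}+1]` for `S = {s₁ < ⋯ < s_k}`,
with `w(∅) = 1`. -/
def wWeight (t : ℕ) (S : Finset ℕ) : ℕ := wAux t 1 (S.sort (· ≤ ·))

/-- The weight `v(S) = w(S ∪ {n+1}) - w(S)` for nonempty `S ⊆ {1,…,n}`, and
`v(∅) = t·[n]`. -/
def vWeight (t n : ℕ) (S : Finset ℕ) : ℤ :=
  if S = ∅ then t * tnum t n else (wWeight t (S ∪ {n + 1}) : ℤ) - (wWeight t S : ℤ)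

/-- The flag `f`-vector entry `f_S` of a bounded poset with rank function `rk`:
the number of chains `⊥ < x₁ < ⋯ < x_k < ⊤` whose multiset of ranks is exactly `S`,
encoded as strictly increasing rank-respecting functions `S → β`. -/
noncomputable def flagF {β : Type} [PartialOrder β] [BoundedOrder β] (rk : β → ℕ) (S : Finset ℕ) : ℕ :=
  Nat.card {g : {s : ℕ // s ∈ S} → β //
    (∀ s, rk (g s) = s.val) ∧
    (∀ s s' : {s : ℕ // s ∈ S}, s.val < s'.val → g s < g s') ∧
    (∀ s, ⊥ < g s ∧ g s < ⊤)}

/-- The proper part of the Rees product of a graded poset `(α, rk)` of rank `n+1`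
with the `t`-ary tree `T_{t,n+1}`: pairs `(p, w)` with `p ≠ ⊥`, `w` a word of length
at most `n` over a `t`-letter alphabet, and `|w| ≤ rk p - 1`. -/
def ReesElt (α : Type) [PartialOrder α] [OrderBot α] (rk : α → ℕ) (t n : ℕ) : Type :=
  {pw : α × List (Fin t) // pw.1 ≠ ⊥ ∧ pw.2.length ≤ n ∧ pw.2.length + 1 ≤ rk pw.1}

/-- The Rees order: `(p,w) ≤ (p',w')` iff `p ≤ p'`, `w` is a prefix of `w'`, and
`rk p' - rk p ≥ |w'| - |w|`. -/
instance (α : Type) [PartialOrder α] [OrderBot α] (rk : α → ℕ) (t n : ℕ) :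
    PartialOrder (ReesElt α rk t n) where
  le a b := a.1.1 ≤ b.1.1 ∧ a.1.2 <+: b.1.2 ∧
    rk a.1.1 + b.1.2.length ≤ rk b.1.1 + a.1.2.length
  le_refl a := ⟨le_refl _, List.prefix_refl _, le_refl _⟩
  le_trans a b c hab hbc :=
    ⟨hab.1.trans hbc.1, hab.2.1.trans hbc.2.1, by
      have h1 := hab.2.2; have h2 := hbc.2.2; omega⟩
  le_antisymm a b hab hba := by
    apply Subtype.ext
    have h1 : a.1.1 = b.1.1 := le_antisymm hab.1 hba.1
    have h2 : a.1.2 = b.1.2 := hab.2.1.eq_of_length_le hba.2.1.length_le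
    exact Prod.ext h1 h2

/-- The Rees product `Rees(P, T_{t,n+1})`: the proper part together with an adjoined
minimum `⊥` and maximum `⊤`. -/
abbrev ReesTree (α : Type) [PartialOrder α] [OrderBot α] (rk : α → ℕ) (t n : ℕ) : Type :=
  WithBot (WithTop (ReesElt α rk t n))

/-- The rank function of `Rees(P, T_{t,n+1})`: `ρ(⊥) = 0`, `ρ(⊤) = n+2`, and
`ρ(p,w) = rk p`. -/
noncomputable def reesRank (α : Type) [PartialOrder α] [OrderBot α] (rk : α → ℕ) (t n : ℕ) :
    ReesTree α rk t n → ℕ :=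
  WithBot.recBotCoe 0 (WithTop.recTopCoe (n + 2) (fun a => rk a.1.1))

lemma card_list_length_le (t k : ℕ) :
    Nat.card {z : List (Fin t) // z.length ≤ k} = tnum t (k + 1) := by
  have e := Equiv.sigmaSubtypeFiberEquivSubtype (List.length (α := Fin t))
    (p := fun z => z.length ≤ k) (q := (· ∈ Finset.range (k + 1)))
    (fun _ => Finset.mem_range_succ_iff.symm)
  have hfib (d : ℕ) : Nat.card {z : List (Fin t) // z.length = d} = t ^ d := by
    change Nat.card (List.Vector (Fin t) d) = _
    simp
  have (d : ℕ) : Finite {z : List (Fin t) // z.length = d} :=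
    inferInstanceAs (Finite (List.Vector (Fin t) d))
  rw [← Nat.card_congr e, Nat.card_sigma]
  simp only [hfib]
  exact Finset.sum_coe_sort (Finset.range (k + 1)) (t ^ ·)

instance {γ : Type*} [Finite γ] (k : ℕ) : Finite {z : List γ // z.length ≤ k} :=
  (List.finite_length_le γ k).to_subtype

def prefixExtensionsEquiv {γ : Type*} {p a : ℕ} (u : List γ) (hpa : p ≤ a) :
    {v : List γ // u <+: v ∧ p + v.length ≤ a + u.length} ≃
      {z : List γ // z.length ≤ a - p} where
  toFun v := ⟨v.1.drop u.length, by have := v.2.1.length_le; grind⟩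
  invFun z := ⟨u ++ z.1, List.prefix_append u z.1, by grind⟩
  left_inv := by
    rintro ⟨v, ⟨r, rfl⟩, -⟩
    simp
  right_inv z := Subtype.ext List.drop_left

lemma card_prefix_extensions {t p a : ℕ} (u : List (Fin t)) (hpa : p ≤ a) :
    Nat.card {v : List (Fin t) // u <+: v ∧ p + v.length ≤ a + u.length} =
      tnum t (a - p + 1) := by
  rw [Nat.card_congr (prefixExtensionsEquiv u hpa), card_list_length_le]

/-- The word coordinates of a chain of the Rees order lying above `(p, u)` with ranks `T`. -/
def WordChain (t : ℕ) (T : Finset ℕ) (p : ℕ) (u : List (Fin t)) : Type :=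
  {w : T → List (Fin t) //
    (∀ s, u <+: w s ∧ p + (w s).length ≤ s + u.length) ∧
    ∀ s s' : T, s.1 < s'.1 → w s <+: w s' ∧ s + (w s').length ≤ s' + (w s).length}

namespace WordChain

variable {t : ℕ}

instance (T : Finset ℕ) (p : ℕ) (u : List (Fin t)) : Finite (WordChain t T p u) := by
  have hlen (w : WordChain t T p u) (s : T) : (w.1 s).length ≤ s + u.length := by
    have := (w.2.1 s).2
    omega
  exact Finite.of_injective
    (fun w (s : T) => (⟨w.1 s, hlen w s⟩ : {z : List (Fin t) // z.length ≤ s + u.length}))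
    fun w w' h => Subtype.ext (funext fun s => congrArg Subtype.val (congrFun h s))

def insertMinEquiv {a : ℕ} {T : Finset ℕ} (ha : ∀ b ∈ T, a < b) (p : ℕ) (u : List (Fin t)) :
    WordChain t (insert a T) p u ≃
      Σ v : {v : List (Fin t) // u <+: v ∧ p + v.length ≤ a + u.length},
        WordChain t T a v.1 where
  toFun w :=
    ⟨⟨w.1 ⟨a, T.mem_insert_self a⟩, w.2.1 _⟩,
      ⟨fun s => w.1 ⟨s, T.mem_insert_of_mem s.2⟩,
        fun s => w.2.2 _ _ (ha s s.2), fun s s' h => w.2.2 _ _ h⟩⟩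
  invFun vw :=
    ⟨fun s => if h : s.1 = a then vw.1.1 else vw.2.1 ⟨s, T.mem_of_mem_insert_of_ne s.2 h⟩,
    by
      intro s
      dsimp only
      split_ifs with h
      · exact ⟨vw.1.2.1, by grind⟩
      · have := vw.2.2.1 ⟨s, T.mem_of_mem_insert_of_ne s.2 h⟩
        exact ⟨vw.1.2.1.trans this.1, by grind⟩,
    by
      intro s s' hss
      have := ha s
      dsimp only
      split_ifs with h h'
      · omega
      · have := vw.2.2.1 ⟨s', T.mem_of_mem_insert_of_ne s'.2 h'⟩
        exact ⟨this.1, by rw [h]; exact this.2⟩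
      · exact absurd (this (T.mem_of_mem_insert_of_ne s.2 h)) (by omega)
      · exact vw.2.2.2 _ _ hss⟩
  left_inv w := by
    refine Subtype.ext (funext fun s => ?_)
    dsimp only
    split_ifs with h
    · exact congrArg w.1 (Subtype.ext h.symm)
    · rfl
  right_inv vw :=
    Sigma.subtype_ext (Subtype.ext (dif_pos rfl)) (funext fun s => dif_neg (ha s s.2).ne')

theorem card_eq {T : Finset ℕ} {p : ℕ} (u : List (Fin t)) (hp : ∀ s ∈ T, p ≤ s) :
    Nat.card (WordChain t T p u) = wAux t p (T.sort (· ≤ ·)) := by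
  induction T using Finset.induction_on_min generalizing p u with
  | empty =>
    have : Unique (WordChain t ∅ p u) :=
      { default := ⟨isEmptyElim, isEmptyElim, isEmptyElim⟩
        uniq := fun w => Subtype.ext (funext isEmptyElim) }
    simp [wAux]
  | insert a T ha ih =>
    have haT : a ∉ T := fun h => lt_irrefl a (ha a h)
    have hpa : p ≤ a := hp a (T.mem_insert_self a)
    have := Finite.of_equiv _ (prefixExtensionsEquiv u hpa).symm
    have := Fintype.ofFinite {v : List (Fin t) // u <+: v ∧ p + v.length ≤ a + u.length}
    rw [Nat.card_congr (insertMinEquiv ha p u), Nat.card_sigma,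
      Finset.sort_insert (r := (· ≤ ·)) (fun b hb => (ha b hb).le) haT, wAux]
    simp only [ih _ fun b hb => (ha b hb).le, Finset.sum_const, Finset.card_univ,
      ← Nat.card_eq_fintype_card, card_prefix_extensions u hpa, smul_eq_mul]

end WordChain

lemma eq_top_of_rank_top_le {α : Type*} [PartialOrder α] [OrderTop α] [Finite α] {rk : α → ℕ}
    (hcov : ∀ x y : α, x ⋖ y → rk y = rk x + 1) {y : α} (hy : rk ⊤ ≤ rk y) : y = ⊤ := by
  by_contra hne
  obtain ⟨m, -, ⟨hm_ne, hm_rk⟩, hm_max⟩ :=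
    Finite.exists_le_maximal (p := fun x : α => x ≠ ⊤ ∧ rk ⊤ ≤ rk x) ⟨hne, hy⟩
  obtain ⟨z, hmz, -⟩ := exists_covBy_le_of_lt (lt_top_iff_ne_top.2 hm_ne)
  have hz_rk := hcov m z hmz
  have hz : z ≠ ⊤ := by
    rintro rfl
    omega
  exact hmz.lt.not_ge (hm_max ⟨hz, by omega⟩ hmz.lt.le)

def RankedChain {β : Type*} [Preorder β] (rk : β → ℕ) (T : Finset ℕ) : Type _ :=
  {f : T → β // (∀ s, rk (f s) = s) ∧ ∀ s s' : T, s.1 < s'.1 → f s ≤ f s'}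

lemma flagF_eq_card_rankedChain {β : Type} [PartialOrder β] [BoundedOrder β] (rk : β → ℕ)
    {T : Finset ℕ} (hT : ∀ s ∈ T, s ≠ rk ⊥ ∧ s ≠ rk ⊤) :
    flagF rk T = Nat.card (RankedChain rk T) := by
  refine Nat.card_congr (Equiv.subtypeEquivRight fun f => ⟨?_, ?_⟩)
  · rintro ⟨hrk, hlt, -⟩
    exact ⟨hrk, fun s s' h => (hlt s s' h).le⟩
  · rintro ⟨hrk, hle⟩
    refine ⟨hrk, fun s s' h => (hle s s' h).lt_of_ne ?_, fun s => ⟨?_, ?_⟩⟩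
    · intro he
      have := congrArg rk he
      rw [hrk, hrk] at this
      omega
    · exact bot_lt_iff_ne_bot.2 fun he => (hT s s.2).1 (by rw [← hrk s, he])
    · exact lt_top_iff_ne_top.2 fun he => (hT s s.2).2 (by rw [← hrk s, he])

namespace RankedChain

variable {β γ : Type*} {T : Finset ℕ}

lemma card_eq_of_orderEmbedding [Preorder β] [Preorder γ] {rkβ : β → ℕ} {rkγ : γ → ℕ}
    (e : γ ↪o β) (hrk : ∀ x, rkβ (e x) = rkγ x) (hrange : ∀ y, rkβ y ∈ T → y ∈ Set.range e) :
    Nat.card (RankedChain rkγ T) = Nat.card (RankedChain rkβ T) := by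
  refine Nat.card_eq_of_bijective (fun f => ⟨fun s => e (f.1 s),
    fun s => (hrk _).trans (f.2.1 s), fun s s' h => e.monotone (f.2.2 s s' h)⟩) ⟨?_, ?_⟩
  · exact fun f f' h =>
      Subtype.ext <| funext fun s => e.injective (congrFun (congrArg Subtype.val h) s)
  · intro g
    choose x hx using fun s : T => hrange (g.1 s) (by rw [g.2.1 s]; exact s.2)
    refine ⟨⟨x, fun s => ?_, fun s s' h => ?_⟩, Subtype.ext (funext hx)⟩
    · rw [← hrk, hx, g.2.1]
    · rw [← e.le_iff_le, hx, hx]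
      exact g.2.2 s s' h

def insertTopEquiv [PartialOrder β] [OrderTop β] {rk : β → ℕ} {m : ℕ} {S : Finset ℕ}
    (hm : ∀ y, rk y = m ↔ y = ⊤) (hS : ∀ s ∈ S, s < m) :
    RankedChain rk (insert m S) ≃ RankedChain rk S where
  toFun f := ⟨fun s => f.1 ⟨s, S.mem_insert_of_mem s.2⟩, fun s => f.2.1 _,
    fun s s' h => f.2.2 _ _ h⟩
  invFun g := ⟨fun s => if h : s.1 ∈ S then g.1 ⟨s, h⟩ else ⊤,
    by
      intro s
      dsimp only
      split_ifs with h
      · exact g.2.1 _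
      · exact ((hm ⊤).2 rfl).trans ((Finset.mem_insert.1 s.2).resolve_right h).symm,
    by
      intro s s' hss
      dsimp only
      split_ifs with hs hs' hs'
      · exact g.2.2 _ _ hss
      · exact le_top
      · have := hS s' hs'
        have := (Finset.mem_insert.1 s.2).resolve_right hs
        omega
      · exact le_rfl⟩
  left_inv f := Subtype.ext <| funext fun s => by
    dsimp only
    split_ifs with h
    · rfl
    · exact ((hm _).1 ((f.2.1 s).trans ((Finset.mem_insert.1 s.2).resolve_right h))).symm
  right_inv g := Subtype.ext <| funext fun s => dif_pos s.2

end RankedChain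

section Rees

variable {α : Type} [PartialOrder α] [OrderBot α] {rk : α → ℕ} {t n : ℕ}

@[simp] lemma reesRank_bot : reesRank α rk t n ⊥ = 0 := rfl

@[simp] lemma reesRank_top : reesRank α rk t n ⊤ = n + 2 := rfl

namespace ReesElt

def rankedChainEquiv (hbot : rk ⊥ = 0) {T : Finset ℕ} (hT : ∀ s ∈ T, 1 ≤ s ∧ s ≤ n + 1) :
    RankedChain (fun x : ReesElt α rk t n => rk x.1.1) T ≃
      RankedChain rk T × WordChain t T 1 [] where
  toFun x := (⟨fun s => (x.1 s).1.1, x.2.1, fun s s' h => (x.2.2 s s' h).1⟩,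
    ⟨fun s => (x.1 s).1.2,
      fun s => ⟨List.nil_prefix, by
        have hlen := (x.1 s).2.2.2
        have hrk : rk (x.1 s).1.1 = s := x.2.1 s
        simp only [List.length_nil, add_zero]
        omega⟩,
      fun s s' h => ⟨(x.2.2 s s' h).2.1, by
        have hle := (x.2.2 s s' h).2.2
        rwa [show rk (x.1 s).1.1 = s from x.2.1 s,
          show rk (x.1 s').1.1 = s' from x.2.1 s'] at hle⟩⟩)
  invFun fw := ⟨fun s => ⟨(fw.1.1 s, fw.2.1 s), by
      dsimp only
      have hrk := fw.1.2.1 s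
      have hs := hT s s.2
      have hlen := (fw.2.2.1 s).2
      simp only [List.length_nil, add_zero] at hlen
      refine ⟨fun h => ?_, by omega, by omega⟩
      rw [h, hbot] at hrk
      omega⟩,
    fw.1.2.1,
    fun s s' h => ⟨fw.1.2.2 s s' h, (fw.2.2.2 s s' h).1, by
      simpa only [fw.1.2.1] using (fw.2.2.2 s s' h).2⟩⟩
  left_inv x := rfl
  right_inv fw := rfl

lemma card_rankedChain {T : Finset ℕ} (hT : ∀ s ∈ T, 1 ≤ s ∧ s ≤ n + 1) :
    Nat.card (RankedChain (fun x : ReesElt α rk t n => rk x.1.1) T) =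
      Nat.card (RankedChain (reesRank α rk t n) T) := by
  refine RankedChain.card_eq_of_orderEmbedding
    (WithTop.coeOrderHom.trans WithBot.coeOrderHom) (fun _ => rfl) fun y hy => ?_
  induction y using WithBot.recBotCoe with
  | bot => exact absurd (hT _ hy).1 (by simp)
  | coe y =>
    induction y using WithTop.recTopCoe with
    | top => exact absurd (hT _ hy).2 (by change ¬n + 2 ≤ n + 1; omega)
    | coe x => exact ⟨x, rfl⟩

end ReesElt

end Rees

theorem statement2_general (n t : ℕ)
    (α : Type) [Fintype α] [PartialOrder α] [BoundedOrder α]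
    (rk : α → ℕ) (hbot : rk ⊥ = 0) (htop : rk ⊤ = n + 1)
    (hcov : ∀ x y : α, x ⋖ y → rk y = rk x + 1)
    (S : Finset ℕ) (hS : S ⊆ Finset.Icc 1 n) :
    flagF (reesRank α rk t n) (S ∪ {n + 1}) = wWeight t (S ∪ {n + 1}) * flagF rk S := by
  have hS' : ∀ s ∈ S, 1 ≤ s ∧ s ≤ n := fun s hs => Finset.mem_Icc.1 (hS hs)
  rw [Finset.union_singleton]
  have hT : ∀ s ∈ insert (n + 1) S, 1 ≤ s ∧ s ≤ n + 1 := by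
    simp only [Finset.mem_insert, forall_eq_or_imp]
    exact ⟨by omega, fun s hs => by have := hS' s hs; omega⟩
  have htop_iff (y : α) : rk y = n + 1 ↔ y = ⊤ :=
    ⟨fun hy => eq_top_of_rank_top_le hcov (by omega), fun hy => hy ▸ htop⟩
  rw [flagF_eq_card_rankedChain _ fun s hs => by
      have := hT s hs; simp only [reesRank_bot, reesRank_top]; omega,
    ← ReesElt.card_rankedChain hT, Nat.card_congr (ReesElt.rankedChainEquiv hbot hT),
    Nat.card_prod, WordChain.card_eq _ fun s hs => (hT s hs).1,
    Nat.card_congr (RankedChain.insertTopEquiv htop_iff fun s hs => by have := hS' s hs; omega),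
    flagF_eq_card_rankedChain rk fun s hs => by have := hS' s hs; omega, mul_comm, wWeight]

theorem statement2 (n t : ℕ) (ht : 1 ≤ t)
    (α : Type) [Fintype α] [PartialOrder α] [BoundedOrder α]
    (rk : α → ℕ) (hbot : rk ⊥ = 0) (htop : rk ⊤ = n + 1)
    (hcov : ∀ x y : α, x ⋖ y → rk y = rk x + 1)
    (S : Finset ℕ) (hS : S ⊆ Finset.Icc 1 n) :
    flagF (reesRank α rk t n) (S ∪ {n + 1}) = wWeight t (S ∪ {n + 1}) * flagF rk S :=
  statement2_general n t α rk hbot htop hcov S hS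
end

section
/- For every n ≥ 1, the Möbius function of the Rees product of the Boolean algebra with the chain satisfies μ(Rees(B_n, C_n)) = (−1)^{n+1} · D_n, where D_n is the number of derangements of {1,…,n}. -/
/-- The proper part of the concrete model of `Rees(B_n, C_n)`: pairs `(A, i)` with
`A` a nonempty subset of `{1,…,n}` and `1 ≤ i ≤ |A|`. -/
def BoolReesElt (n : ℕ) : Type :=
  {Ai : Finset (Fin n) × ℕ // Ai.1.Nonempty ∧ 1 ≤ Ai.2 ∧ Ai.2 ≤ Ai.1.card}

/-- The order: `(A,i) ≤ (B,j)` iff `A ⊆ B`, `i ≤ j`, and `j - i ≤ |B| - |A|`. -/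
instance (n : ℕ) : PartialOrder (BoolReesElt n) where
  le a b := a.1.1 ⊆ b.1.1 ∧ a.1.2 ≤ b.1.2 ∧ b.1.2 + a.1.1.card ≤ a.1.2 + b.1.1.card
  le_refl a := ⟨Finset.Subset.refl _, le_refl _, le_refl _⟩
  le_trans a b c hab hbc :=
    ⟨hab.1.trans hbc.1, hab.2.1.trans hbc.2.1, by
      have h1 := hab.2.2; have h2 := hbc.2.2; omega⟩
  le_antisymm a b hab hba := by
    apply Subtype.ext
    exact Prod.ext (Finset.Subset.antisymm hab.1 hba.1) (le_antisymm hab.2.1 hba.2.1)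

/-- The concrete model of `Rees(B_n, C_n)`: the proper part together with an
adjoined minimum `⊥` and maximum `⊤`. -/
abbrev BoolRees (n : ℕ) : Type := WithBot (WithTop (BoolReesElt n))

/-- The derangement number `D_m`: the number of permutations of `{1,…,m}` with
no fixed point. -/
noncomputable def derangementCount (m : ℕ) : ℕ :=
  Nat.card {σ : Equiv.Perm (Fin m) // ∀ i, σ i ≠ i}

/-!
Write `μ z` for `μ(0̂, z)`. Summing the defining recursion `Σ_{0̂ ≤ w ≤ z} μ w = 0` over the `|A|`
elements `z = (A, i)` lying over a fixed set `A`, and noting that `(B, j) ≤ (A, i)` holds for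
exactly `|A| - |B| + 1` levels `i` when `B ⊆ A`, the fiber sums `c A = Σ_i μ (A, i)` satisfy the
unitriangular system `Σ_{B ⊆ A} (|A| - |B| + 1) c B = -|A|`. Its solution is
`c A = (-1)^|A| |A|!`, by a telescoping sum of falling factorials. The recursion at `1̂` then gives
`μ(0̂, 1̂) = -1 - Σ_{∅ ≠ A} (-1)^|A| |A|! = -Σ_k (-1)^k n!/(n-k)! = (-1)^(n+1) D_n`.
-/

open Finset
open scoped Nat

theorem sum_range_neg_one_pow_mul_descFactorial (n : ℕ) :
    ∑ b ∈ range (n + 1), (-1 : ℤ) ^ b * n.descFactorial b = (-1) ^ n * numDerangements n := by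
  induction n with
  | zero => simp
  | succ n ih =>
    have hshift : ∑ b ∈ range (n + 1), (-1 : ℤ) ^ (b + 1) * (n + 1).descFactorial (b + 1)
        = -(n + 1) * ∑ b ∈ range (n + 1), (-1 : ℤ) ^ b * n.descFactorial b := by
      rw [mul_sum]
      refine sum_congr rfl fun b _ => ?_
      rw [Nat.succ_descFactorial_succ]
      push_cast
      ring
    have hsq : ((-1 : ℤ) ^ n) ^ 2 = 1 := by rw [← pow_mul, pow_mul', neg_one_sq, one_pow]
    rw [sum_range_succ', hshift, ih, numDerangements_succ, Nat.descFactorial_zero]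
    linear_combination -hsq

theorem sum_range_neg_one_pow_mul_sub_add_one_mul_descFactorial (a : ℕ) :
    ∑ b ∈ range (a + 1), (-1 : ℤ) ^ b * ((a - b + 1 : ℕ) * a.descFactorial b) = 1 := by
  have htele : ∀ b ∈ range (a + 1), (-1 : ℤ) ^ b * ((a - b + 1 : ℕ) * a.descFactorial b)
      = (-1) ^ b * a.descFactorial b - (-1) ^ (b + 1) * a.descFactorial (b + 1) := by
    intro b _
    rw [Nat.descFactorial_succ, Nat.cast_mul, Nat.cast_add, Nat.cast_one]
    ring
  rw [sum_congr rfl htele, sum_range_sub', Nat.descFactorial_of_lt (Nat.lt_succ_self a)]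
  simp

theorem sum_powerset_neg_one_pow_mul_factorial {α : Type*} (A : Finset α) :
    ∑ B ∈ A.powerset, (-1 : ℤ) ^ #B * (#B)! = (-1) ^ #A * numDerangements #A := by
  rw [sum_powerset_apply_card (fun b => (-1 : ℤ) ^ b * b !),
    ← sum_range_neg_one_pow_mul_descFactorial]
  refine sum_congr rfl fun b _ => ?_
  rw [Nat.descFactorial_eq_factorial_mul_choose, nsmul_eq_mul]
  push_cast
  ring

theorem sum_powerset_sub_add_one_mul_neg_one_pow_mul_factorial {α : Type*} (A : Finset α) :
    ∑ B ∈ A.powerset, ((#A - #B + 1 : ℕ) : ℤ) * ((-1) ^ #B * (#B)!) = 1 := by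
  rw [sum_powerset_apply_card (fun b => ((#A - b + 1 : ℕ) : ℤ) * ((-1) ^ b * b !))]
  refine (sum_congr rfl fun b _ => ?_).trans
    (sum_range_neg_one_pow_mul_sub_add_one_mul_descFactorial #A)
  rw [Nat.descFactorial_eq_factorial_mul_choose, nsmul_eq_mul]
  push_cast
  ring

theorem Finset.eq_of_sum_powerset_mul_eq {α R : Type*} [DecidableEq α] [Ring R]
    {c d : Finset α → R} (k : Finset α → Finset α → R) (hk : ∀ A, k A A = 1)
    (h : ∀ A, ∑ B ∈ A.powerset, k A B * c B = ∑ B ∈ A.powerset, k A B * d B) (A : Finset α) :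
    c A = d A := by
  induction A using Finset.strongInduction with
  | H A ih =>
    have hA := h A
    rw [← sum_erase_add _ _ (mem_powerset_self A), ← sum_erase_add _ _ (mem_powerset_self A),
      hk, one_mul, one_mul] at hA
    have hlower :
        ∑ B ∈ A.powerset.erase A, k A B * c B = ∑ B ∈ A.powerset.erase A, k A B * d B :=
      sum_congr rfl fun B hB => by
        have hBA : B ⊂ A :=
          ssubset_iff_subset_ne.2 ⟨mem_powerset.1 (mem_of_mem_erase hB), ne_of_mem_erase hB⟩
        rw [ih B hBA]
    rwa [hlower, add_right_inj] at hA

section WithBotWithTop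

variable {α M : Type*} [AddCommMonoid M]

theorem Fintype.sum_withBot_withTop [Fintype α] (f : WithBot (WithTop α) → M) :
    ∑ x, f x = f ⊥ + (f (⊤ : WithTop α) + ∑ a : α, f ((a : WithTop α) : WithBot (WithTop α))) :=
  (Fintype.sum_option f).trans (congrArg _ (Fintype.sum_option _))

variable [PartialOrder α] [Fintype α] [DecidableLE α] (f : WithBot (WithTop α) → M)

theorem finsum_mem_Icc_bot_eq_sum (y : WithBot (WithTop α)) :
    ∑ᶠ x ∈ Set.Icc ⊥ y, f x = ∑ x, if x ≤ y then f x else 0 := by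
  classical
  rw [Set.Icc_bot, finsum_mem_eq_finite_toFinset_sum _ (Set.toFinite _), ← sum_filter]
  congr
  ext
  simp

theorem finsum_mem_Icc_bot_coe_coe (z : α) :
    ∑ᶠ x ∈ Set.Icc ⊥ ((z : WithTop α) : WithBot (WithTop α)), f x
      = f ⊥ + ∑ a with a ≤ z, f ((a : WithTop α) : WithBot (WithTop α)) := by
  rw [finsum_mem_Icc_bot_eq_sum, Fintype.sum_withBot_withTop]
  simp [sum_filter]

theorem finsum_mem_Icc_bot_top :
    ∑ᶠ x ∈ Set.Icc ⊥ ⊤, f x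
      = f ⊥ + (f (⊤ : WithTop α) + ∑ a : α, f ((a : WithTop α) : WithBot (WithTop α))) := by
  rw [finsum_mem_Icc_bot_eq_sum, Fintype.sum_withBot_withTop]
  simp

end WithBotWithTop

namespace BoolReesElt

variable {n : ℕ}

instance : Finite (BoolReesElt n) :=
  Finite.of_injective (fun w : BoolReesElt n => (w.1.1, (⟨w.1.2, by
      have := w.1.1.card_le_univ; have := w.2.2.2; simp only [Fintype.card_fin] at *; omega⟩ :
        Fin (n + 1))))
    fun w z h => by
      simp only [Prod.mk.injEq, Fin.mk.injEq] at h
      exact Subtype.ext (Prod.ext h.1 h.2)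

noncomputable instance : Fintype (BoolReesElt n) := Fintype.ofFinite _

theorem le_def {w z : BoolReesElt n} :
    w ≤ z ↔ w.1.1 ⊆ z.1.1 ∧ w.1.2 ≤ z.1.2 ∧ z.1.2 + #w.1.1 ≤ w.1.2 + #z.1.1 :=
  Iff.rfl

instance : DecidableLE (BoolReesElt n) := fun _ _ => decidable_of_iff _ le_def.symm

theorem sum_filter_fst_eq {M : Type*} [AddCommMonoid M] (A : Finset (Fin n)) (g : ℕ → M) :
    ∑ z : BoolReesElt n with z.1.1 = A, g z.1.2 = ∑ i ∈ Icc 1 #A, g i := by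
  refine sum_bij (fun z _ => z.1.2) (fun z hz => ?_) (fun z hz w hw h => ?_) (fun i hi => ?_)
    fun _ _ => rfl
  · rw [mem_filter] at hz
    exact mem_Icc.2 ⟨z.2.2.1, hz.2 ▸ z.2.2.2⟩
  · exact Subtype.ext (Prod.ext ((mem_filter.1 hz).2.trans (mem_filter.1 hw).2.symm) h)
  · obtain ⟨h1, h2⟩ := mem_Icc.1 hi
    exact ⟨⟨(A, i), card_pos.1 (show 0 < #A by omega), h1, h2⟩,
      mem_filter.2 ⟨mem_univ _, rfl⟩, rfl⟩

theorem card_filter_fst_eq (A : Finset (Fin n)) : #{z : BoolReesElt n | z.1.1 = A} = #A := by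
  rw [card_eq_sum_ones, sum_filter_fst_eq A fun _ => 1, sum_const, Nat.card_Icc, smul_eq_mul,
    mul_one, Nat.add_sub_cancel]

theorem card_filter_fst_eq_and_le (w : BoolReesElt n) (A : Finset (Fin n)) :
    #{z : BoolReesElt n | z.1.1 = A ∧ w ≤ z} = if w.1.1 ⊆ A then #A - #w.1.1 + 1 else 0 := by
  by_cases hsub : w.1.1 ⊆ A
  · have hcard := card_le_card hsub
    have ⟨_, hw1, hw2⟩ := w.2
    rw [if_pos hsub, ← filter_filter, card_filter]
    have hfiber : ∀ z ∈ ({z : BoolReesElt n | z.1.1 = A} : Finset _), (if w ≤ z then 1 else 0)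
        = if w.1.2 ≤ z.1.2 ∧ z.1.2 + #w.1.1 ≤ w.1.2 + #A then 1 else 0 := by
      intro z hz
      exact if_congr (by rw [le_def, (mem_filter.1 hz).2, and_iff_right hsub]) rfl rfl
    rw [sum_congr rfl hfiber, sum_filter_fst_eq A (fun i =>
      if w.1.2 ≤ i ∧ i + #w.1.1 ≤ w.1.2 + #A then 1 else 0), ← card_filter]
    have hlevels : {i ∈ Icc 1 #A | w.1.2 ≤ i ∧ i + #w.1.1 ≤ w.1.2 + #A}
        = Icc w.1.2 (w.1.2 + (#A - #w.1.1)) := by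
      ext i
      simp only [mem_filter, mem_Icc]
      omega
    rw [hlevels, Nat.card_Icc]
    omega
  · rw [if_neg hsub, card_eq_zero, filter_eq_empty_iff]
    rintro z - ⟨rfl, hle⟩
    exact hsub hle.1

noncomputable def fiberSum (m : BoolReesElt n → ℤ) (A : Finset (Fin n)) : ℤ :=
  ∑ z with z.1.1 = A, m z

variable {m : BoolReesElt n → ℤ}

theorem sum_powerset_mul_fiberSum (hm : ∀ z, 1 + ∑ w with w ≤ z, m w = 0)
    (A : Finset (Fin n)) :
    ∑ B ∈ A.powerset, ((#A - #B + 1 : ℕ) : ℤ) * fiberSum m B = -#A := by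
  have hcount : ∑ z : BoolReesElt n with z.1.1 = A, ∑ w with w ≤ z, m w
      = ∑ B ∈ A.powerset, ((#A - #B + 1 : ℕ) : ℤ) * fiberSum m B :=
    calc ∑ z : BoolReesElt n with z.1.1 = A, ∑ w with w ≤ z, m w
        = ∑ w, ∑ z : BoolReesElt n with z.1.1 = A ∧ w ≤ z, m w :=
          sum_comm' fun z w => by simp only [mem_filter, mem_univ, true_and, and_true]
      _ = ∑ w, (if w.1.1 ⊆ A then ((#A - #w.1.1 + 1 : ℕ) : ℤ) else 0) * m w := by
          simp only [sum_const, card_filter_fst_eq_and_le, nsmul_eq_mul, Nat.cast_ite,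
            Nat.cast_zero]
      _ = ∑ B, (if B ⊆ A then ((#A - #B + 1 : ℕ) : ℤ) else 0) * fiberSum m B := by
          rw [← sum_fiberwise univ (fun w : BoolReesElt n => w.1.1)]
          simp only [fiberSum, mul_sum]
          exact sum_congr rfl fun B _ => sum_congr rfl fun w hw => by rw [(mem_filter.1 hw).2]
      _ = ∑ B ∈ A.powerset, ((#A - #B + 1 : ℕ) : ℤ) * fiberSum m B := by
          simp only [ite_mul, zero_mul, ← sum_filter, filter_subset_univ]
  have hA : ∑ z : BoolReesElt n with z.1.1 = A, (1 + ∑ w with w ≤ z, m w) = 0 :=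
    sum_eq_zero fun z _ => hm z
  rw [sum_add_distrib, hcount, sum_const, card_filter_fst_eq, nsmul_eq_mul, mul_one] at hA
  linarith

/-- The correction term makes `⊥` the one element lying over `∅`. -/
theorem fiberSum_add_ite_eq (hm : ∀ z, 1 + ∑ w with w ≤ z, m w = 0) (A : Finset (Fin n)) :
    fiberSum m A + (if A = ∅ then 1 else 0) = (-1) ^ #A * (#A)! := by
  refine eq_of_sum_powerset_mul_eq (c := fun B => fiberSum m B + if B = ∅ then 1 else 0)
    (d := fun B => (-1) ^ #B * (#B)!)
    (fun A B => ((#A - #B + 1 : ℕ) : ℤ)) (by simp) (fun A => ?_) A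
  rw [sum_powerset_sub_add_one_mul_neg_one_pow_mul_factorial]
  simp only [mul_add, sum_add_distrib, sum_powerset_mul_fiberSum hm, mul_ite, mul_one, mul_zero,
    sum_ite_eq', empty_mem_powerset, if_true, card_empty, Nat.sub_zero]
  push_cast
  ring

end BoolReesElt

theorem derangementCount_eq_numDerangements (m : ℕ) : derangementCount m = numDerangements m :=
  (Nat.card_eq_fintype_card (α := derangements (Fin m))).trans
    card_derangements_fin_eq_numDerangements

theorem statement14_general (n : ℕ)
    (mu : BoolRees n → BoolRees n → ℤ)
    (hmu_refl : ∀ x, mu x x = 1)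
    (hmu_rec : ∀ x y : BoolRees n, x < y → ∑ᶠ z ∈ Set.Icc x y, mu x z = 0) :
    mu ⊥ ⊤ = (-1) ^ (n + 1) * (derangementCount n : ℤ) := by
  set m : BoolReesElt n → ℤ := fun w => mu ⊥ ((w : WithTop (BoolReesElt n)) : BoolRees n)
  have hm : ∀ z, 1 + ∑ w with w ≤ z, m w = 0 := fun z => by
    simpa only [finsum_mem_Icc_bot_coe_coe, hmu_refl] using
      hmu_rec ⊥ _ (WithBot.bot_lt_coe (z : WithTop (BoolReesElt n)))
  have htop : 1 + (mu ⊥ ⊤ + ∑ w, m w) = 0 := by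
    simpa only [finsum_mem_Icc_bot_top, hmu_refl, WithBot.coe_top] using hmu_rec ⊥ ⊤ bot_lt_top
  have hfibers : ∑ w, m w + 1 = (-1) ^ n * numDerangements n := by
    have hD := sum_powerset_neg_one_pow_mul_factorial (univ : Finset (Fin n))
    rw [powerset_univ, card_univ, Fintype.card_fin] at hD
    calc ∑ w, m w + 1
        = ∑ A, (BoolReesElt.fiberSum m A + if A = ∅ then 1 else 0) := by
          rw [sum_add_distrib, sum_ite_eq', if_pos (mem_univ _),
            ← sum_fiberwise univ (fun w : BoolReesElt n => w.1.1) m]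
          rfl
      _ = ∑ A : Finset (Fin n), (-1 : ℤ) ^ #A * (#A)! :=
          sum_congr rfl fun A _ => BoolReesElt.fiberSum_add_ite_eq hm A
      _ = _ := hD
  rw [derangementCount_eq_numDerangements, pow_succ]
  linear_combination htop - hfibers

theorem statement14 (n : ℕ) (hn : 1 ≤ n)
    (mu : BoolRees n → BoolRees n → ℤ)
    (hmu_refl : ∀ x, mu x x = 1)
    (hmu_rec : ∀ x y : BoolRees n, x < y → ∑ᶠ z ∈ Set.Icc x y, mu x z = 0) :
    mu ⊥ ⊤ = (-1) ^ (n + 1) * (derangementCount n : ℤ) :=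
  statement14_general n mu hmu_refl hmu_rec
end

section
/- For every n ≥ 1, the identity n · D_{n−1}^± = (−1)^{n+1} + Σ_{i=0}^{n} (−1)^i · 2^{n−i} · C(n,i) · (i+1) · (n−i)! holds, where D_{n−1}^± is the signed derangement number. -/
/-!
By inclusion–exclusion over the set of indices forced to be positive fixed points,
`D_m^± = ∑_k (-1)^k C(m,k) 2^(m-k) (m-k)!`: a signed permutation that is a positive fixed point
on a `k`-set is an arbitrary signed permutation of the other `m - k` points. This closed form
satisfies `D_(m+1)^± = 2(m+1) D_m^± + (-1)^(m+1)`. Writing `i + 1 = 1 + i` splits the sum of the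
statement into `D_n^± - n D_(n-1)^±`, the `i`-part by absorption `i C(n,i) = n C(n-1,i-1)`, and
the recurrence turns this into the identity.
-/

/-- The signed derangement number `D_m^±`: the number of signed permutations
`(σ, ε)` on `m` elements with no fixed point, where an index `i` is a fixed point
if `σ(i) = i` and `ε(i) = +1` (encoded as `true`). -/
noncomputable def signedDerangementCount (m : ℕ) : ℕ :=
  Nat.card {p : Equiv.Perm (Fin m) × (Fin m → Bool) //
    ∀ i, ¬(p.1 i = i ∧ p.2 i = true)}

open Finset Equiv Nat

section InclusionExclusion

variable {α : Type*} [Fintype α] [DecidableEq α]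

def signedFixers (i : α) : Finset (Perm α × (α → Bool)) :=
  {p | p.1 i = i ∧ p.2 i = true}

lemma card_perm_fixing (t : Finset α) :
    #{σ : Perm α | ∀ i ∈ t, σ i = i} = (Fintype.card α - #t)! := by
  rw [← Fintype.card_subtype]
  have e := Perm.subtypeEquivSubtypePerm (fun a : α => a ∉ t)
  simp only [not_not] at e
  rw [← Fintype.card_congr e, Fintype.card_perm, Fintype.card_subtype_compl, Fintype.card_coe]

lemma card_signs_true_on (t : Finset α) :
    #{ε : α → Bool | ∀ i ∈ t, ε i = true} = 2 ^ (Fintype.card α - #t) := by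
  have : ({ε : α → Bool | ∀ i ∈ t, ε i = true} : Finset _) =
      Fintype.piFinset fun i => if i ∈ t then {true} else univ := by
    ext ε
    simp only [mem_filter, mem_univ, true_and, Fintype.mem_piFinset]
    refine forall_congr' fun i => ?_
    split_ifs <;> simp [*]
  rw [this, Fintype.card_piFinset]
  simp [apply_ite card, prod_ite, filter_not, card_sdiff]

lemma card_inf_signedFixers (t : Finset α) :
    #(t.inf signedFixers) = 2 ^ (Fintype.card α - #t) * (Fintype.card α - #t)! := by
  have : t.inf signedFixers =
      ({σ : Perm α | ∀ i ∈ t, σ i = i} : Finset _) ×ˢ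
        ({ε : α → Bool | ∀ i ∈ t, ε i = true} : Finset _) := by
    ext p
    simp [mem_inf, signedFixers, forall_and]
  rw [this, card_product, card_perm_fixing, card_signs_true_on, mul_comm]

variable (α) in
lemma natCard_signedDerangements_eq_sum :
    (Nat.card {p : Perm α × (α → Bool) // ∀ i, ¬(p.1 i = i ∧ p.2 i = true)} : ℤ) =
      ∑ k ∈ range (Fintype.card α + 1),
        (-1) ^ k * 2 ^ (Fintype.card α - k) * ((Fintype.card α).choose k : ℤ) *
          ((Fintype.card α - k)! : ℤ) := by
  have hinf : ({p | ∀ i, ¬(p.1 i = i ∧ p.2 i = true)} : Finset (Perm α × (α → Bool))) =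
      univ.inf fun i => (signedFixers i)ᶜ := by
    ext p
    simp [mem_inf, signedFixers]
  rw [Nat.card_eq_fintype_card, Fintype.card_subtype, hinf, inclusion_exclusion_card_inf_compl]
  simp_rw [card_inf_signedFixers]
  rw [sum_powerset_apply_card
    (fun k => (-1 : ℤ) ^ k * ↑(2 ^ (Fintype.card α - k) * (Fintype.card α - k)!)),
    Finset.card_univ]
  refine sum_congr rfl fun k _ => ?_
  push_cast
  ring

end InclusionExclusion

lemma signedDerangementCount_eq_sum (m : ℕ) :
    (signedDerangementCount m : ℤ) =
      ∑ k ∈ range (m + 1), (-1) ^ k * 2 ^ (m - k) * (m.choose k : ℤ) * ((m - k)! : ℤ) := by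
  rw [signedDerangementCount, natCard_signedDerangements_eq_sum, Fintype.card_fin]

lemma choose_mul_factorial_sub_succ {n k : ℕ} (hk : k ≤ n) :
    (n + 1).choose k * (n + 1 - k)! = (n + 1) * (n.choose k * (n - k)!) := by
  apply Nat.eq_of_mul_eq_mul_right k.factorial_pos
  calc (n + 1).choose k * (n + 1 - k)! * k ! = (n + 1)! := by
        rw [mul_right_comm, Nat.choose_mul_factorial_mul_factorial (hk.trans n.le_succ)]
    _ = (n + 1) * (n.choose k * (n - k)! * k !) := by
        rw [mul_right_comm _ (n - k)!, Nat.choose_mul_factorial_mul_factorial hk,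
          Nat.factorial_succ]
    _ = (n + 1) * (n.choose k * (n - k)!) * k ! := by ring

lemma signedDerangementCount_succ (m : ℕ) :
    (signedDerangementCount (m + 1) : ℤ) =
      2 * (m + 1) * signedDerangementCount m + (-1) ^ (m + 1) := by
  rw [signedDerangementCount_eq_sum, signedDerangementCount_eq_sum, sum_range_succ, mul_sum]
  simp only [Nat.sub_self, pow_zero, Nat.choose_self, Nat.cast_one, mul_one, Nat.factorial_zero]
  congr 1
  refine sum_congr rfl fun k hk => ?_
  have hk : k ≤ m := Nat.lt_succ_iff.mp (mem_range.mp hk)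
  have key : ((m + 1).choose k : ℤ) * ((m + 1 - k)! : ℤ) =
      (m + 1) * (m.choose k * (m - k)!) := by
    exact_mod_cast choose_mul_factorial_sub_succ hk
  rw [show m + 1 - k = m - k + 1 by omega, pow_succ] at *
  linear_combination (-1 : ℤ) ^ k * 2 ^ (m - k) * 2 * key

lemma sum_mul_index_eq_neg_mul_signedDerangementCount (m : ℕ) :
    ∑ i ∈ range (m + 2),
        (-1) ^ i * 2 ^ (m + 1 - i) * ((m + 1).choose i : ℤ) * (i : ℤ) * ((m + 1 - i)! : ℤ) =
      -((m + 1) * signedDerangementCount m) := by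
  rw [sum_range_succ', signedDerangementCount_eq_sum, mul_sum, ← sum_neg_distrib]
  simp only [Nat.cast_zero, mul_zero, zero_mul, add_zero]
  refine sum_congr rfl fun j _ => ?_
  have key : ((m : ℤ) + 1) * m.choose j = (m + 1).choose (j + 1) * ((j : ℤ) + 1) := by
    exact_mod_cast Nat.add_one_mul_choose_eq m j
  rw [show m + 1 - (j + 1) = m - j by omega]
  push_cast
  linear_combination (-1 : ℤ) ^ j * 2 ^ (m - j) * ((m - j)! : ℤ) * key

theorem statement17_general (n : ℕ) :
    (n : ℤ) * (signedDerangementCount (n - 1) : ℤ) =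
      (-1) ^ (n + 1) + ∑ i ∈ Finset.range (n + 1),
        (-1) ^ i * 2 ^ (n - i) * (n.choose i : ℤ) * (i + 1 : ℤ) *
          ((n - i).factorial : ℤ) := by
  cases n with
  | zero => simp
  | succ m =>
    have split : ∑ i ∈ range (m + 2),
        (-1) ^ i * 2 ^ (m + 1 - i) * ((m + 1).choose i : ℤ) * (i + 1 : ℤ) *
          ((m + 1 - i)! : ℤ) =
        signedDerangementCount (m + 1) + ∑ i ∈ range (m + 2),
          (-1) ^ i * 2 ^ (m + 1 - i) * ((m + 1).choose i : ℤ) * (i : ℤ) *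
            ((m + 1 - i)! : ℤ) := by
      rw [signedDerangementCount_eq_sum, ← sum_add_distrib]
      exact sum_congr rfl fun i _ => by ring
    rw [split, sum_mul_index_eq_neg_mul_signedDerangementCount, signedDerangementCount_succ]
    push_cast
    ring

theorem statement17 (n : ℕ) (hn : 1 ≤ n) :
    (n : ℤ) * (signedDerangementCount (n - 1) : ℤ) =
      (-1) ^ (n + 1) + ∑ i ∈ Finset.range (n + 1),
        (-1) ^ i * 2 ^ (n - i) * (n.choose i : ℤ) * (i + 1 : ℤ) *
          ((n - i).factorial : ℤ) :=
  statement17_general n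
end
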